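/- arXiv:1501.07301 — 12 statements merged into one kernel-verified Lean document; each statement's English description precedes it below -/
import Mathlib

section
/- Let A be a set of nonnegative integers that is closed under addition. Then the complement ℤ₊ \ A is infinite if and only if there exists an integer u > 1 such that every element of A is divisible by u (i.e., A ⊆ uℤ). -/
/-
View `A` as a set `S ⊆ ℕ` closed under addition and let `g` be the gcd of `S`.
If `g = 1`, the additive monoid generated by `S`, which is `S ∪ {0}`, contains every large
integer (Mathlib's `Nat.exists_mem_closure_of_ge`), so `ℕ \ S` is finite. Otherwise any prime
divisor of `g` (every natural number divides `g = 0`) divides all of `S`. Conversely, if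
`u > 1` divides every element of `S`, then no `u * k + 1` lies in `S`.
-/

theorem AddSubmonoid.closure_subset_insert_zero {M : Type*} [AddMonoid M] {s : Set M}
    (hs : ∀ a ∈ s, ∀ b ∈ s, a + b ∈ s) : (closure s : Set M) ⊆ insert 0 s := by
  let t : AddSubmonoid M :=
    { carrier := insert 0 s
      zero_mem' := Set.mem_insert 0 s
      add_mem' := by
        rintro a b (rfl | ha) (rfl | hb)
        · simp
        · simpa using Or.inr hb
        · simpa using Or.inr ha
        · exact Or.inr (hs a ha b hb) }
  exact closure_le (S := t).mpr (Set.subset_insert 0 s)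

namespace Nat

variable {S : Set ℕ}

theorem finite_compl_of_setGcd_eq_one (hS : ∀ a ∈ S, ∀ b ∈ S, a + b ∈ S) (hg : setGcd S = 1) :
    Sᶜ.Finite := by
  obtain ⟨n, hn⟩ := exists_mem_closure_of_ge S
  refine (Set.finite_Iic n).subset fun m hm => ?_
  by_contra hnm
  rw [Set.mem_Iic, not_le] at hnm
  rcases AddSubmonoid.closure_subset_insert_zero hS (hn m hnm.le (hg ▸ one_dvd m)) with rfl | hmS
  · exact absurd hnm (Nat.not_lt_zero n)
  · exact hm hmS

theorem infinite_compl_of_dvd {u : ℕ} (hu : 1 < u) (hdvd : ∀ a ∈ S, u ∣ a) : Sᶜ.Infinite := by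
  refine Set.infinite_of_injective_forall_mem (f := fun k : ℕ => u * k + 1)
    (fun j k h => Nat.eq_of_mul_eq_mul_left (by omega) (Nat.add_right_cancel h)) fun k hk => ?_
  have : u ∣ 1 := (Nat.dvd_add_right (dvd_mul_right u k)).mp (hdvd _ hk)
  exact absurd (Nat.le_of_dvd one_pos this) (by omega)

theorem infinite_compl_iff_exists_dvd (hS : ∀ a ∈ S, ∀ b ∈ S, a + b ∈ S) :
    Sᶜ.Infinite ↔ ∃ u, 1 < u ∧ ∀ a ∈ S, u ∣ a := by
  refine ⟨fun hinf => ?_, fun ⟨u, hu, hdvd⟩ => infinite_compl_of_dvd hu hdvd⟩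
  have hg : setGcd S ≠ 1 := fun hg => hinf (finite_compl_of_setGcd_eq_one hS hg)
  obtain ⟨p, hp, hpg⟩ := exists_prime_and_dvd hg
  exact ⟨p, hp.one_lt, dvd_setGcd_iff.mp hpg⟩

end Nat

/-- Let `A` be a set of nonnegative integers closed under addition. The complement
`ℤ₊ \ A` is infinite iff `A ⊆ uℤ` for some integer `u > 1`. -/
theorem stmt0 (A : Set ℤ) (hpos : ∀ a ∈ A, 0 ≤ a)
    (hadd : ∀ a ∈ A, ∀ b ∈ A, a + b ∈ A) :
    {z : ℤ | 0 ≤ z ∧ z ∉ A}.Infinite ↔ ∃ u : ℤ, 1 < u ∧ ∀ a ∈ A, u ∣ a := by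
  obtain ⟨S, rfl⟩ : ∃ S : Set ℕ, A = (↑) '' S := by
    refine ⟨{n | (n : ℤ) ∈ A}, Set.ext fun a => ⟨fun ha => ?_, fun ⟨n, hn, hna⟩ => hna ▸ hn⟩⟩
    lift a to ℕ using hpos a ha
    exact ⟨a, ha, rfl⟩
  have hS : ∀ a ∈ S, ∀ b ∈ S, a + b ∈ S := fun a ha b hb => by
    obtain ⟨c, hc, hcab⟩ := hadd a ⟨a, ha, rfl⟩ b ⟨b, hb, rfl⟩
    exact (Nat.cast_injective (R := ℤ) (by push_cast; exact hcab) : c = a + b) ▸ hc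
  have hcompl : {z : ℤ | 0 ≤ z ∧ z ∉ (↑) '' S} = (↑) '' Sᶜ := by
    ext z
    constructor
    · rintro ⟨hz, hzS⟩
      lift z to ℕ using hz
      exact ⟨z, fun h => hzS ⟨z, h, rfl⟩, rfl⟩
    · rintro ⟨n, hn, rfl⟩
      exact ⟨n.cast_nonneg, by simpa using hn⟩
  rw [hcompl, Set.infinite_image_iff Nat.cast_injective.injOn, Nat.infinite_compl_iff_exists_dvd hS]
  constructor
  · rintro ⟨u, hu, hdvd⟩
    exact ⟨u, by exact_mod_cast hu, by simpa [Int.natCast_dvd_natCast] using hdvd⟩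
  · rintro ⟨u, hu, hdvd⟩
    lift u to ℕ using by omega
    exact ⟨u, by exact_mod_cast hu, by simpa [Int.natCast_dvd_natCast] using hdvd⟩
end

section
/- Let p(X₁,…,Xₙ) = a₁X₁ + ⋯ + aₙXₙ (with n ≥ 1) be a homogeneous linear pattern admitted by ℤ₊, and let I be an ideal of a numerical semigroup S. Then p(I) is an ideal of some numerical semigroup if and only if gcd(a₁,…,aₙ) = 1. -/
open Finset

/-- A numerical semigroup: a set of nonnegative integers containing 0, closed under
addition, with finite complement in ℤ₊. -/
def IsNumericalSemigroup (S : Set ℤ) : Prop :=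
  (0 : ℤ) ∈ S ∧ (∀ s ∈ S, 0 ≤ s) ∧ (∀ a ∈ S, ∀ b ∈ S, a + b ∈ S) ∧
    {z : ℤ | 0 ≤ z ∧ z ∉ S}.Finite

/-- An ideal of a numerical semigroup `S`: a nonempty subset `I ⊆ S` with `I + S ⊆ I`. -/
def IsIdealOf (I S : Set ℤ) : Prop :=
  I.Nonempty ∧ I ⊆ S ∧ ∀ x ∈ I, ∀ s ∈ S, x + s ∈ I

/-- The image of the set `A` under the linear pattern `a₁X₁+⋯+aₙXₙ+a₀`:
values on non-increasing sequences of elements of `A`. -/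
def patternImage {n : ℕ} (a : Fin n → ℤ) (a₀ : ℤ) (A : Set ℤ) : Set ℤ :=
  {y : ℤ | ∃ s : Fin n → ℤ, Antitone s ∧ (∀ i, s i ∈ A) ∧ y = ∑ i, a i * s i + a₀}

/-- The linear pattern `a₁X₁+⋯+aₙXₙ+a₀` is admitted by the ideal `I` with codomain `S`:
on every non-increasing sequence of elements of `I` it takes a value in `S`. -/
def AdmittedBy {n : ℕ} (a : Fin n → ℤ) (a₀ : ℤ) (I S : Set ℤ) : Prop :=
  ∀ s : Fin n → ℤ, Antitone s → (∀ i, s i ∈ I) → ∑ i, a i * s i + a₀ ∈ S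

/-- A linear pattern is premonic if some initial partial sum of its coefficients equals 1. -/
def Premonic {n : ℕ} (a : Fin n → ℤ) : Prop :=
  ∃ k : ℕ, 1 ≤ k ∧ k ≤ n ∧
    ∑ i ∈ Finset.univ.filter (fun i : Fin n => (i : ℕ) < k), a i = 1

/-!
Write `p(A)` for `patternImage a 0 A`. Adding a non-increasing sequence of elements of `S`
to one of elements of `I` gives a non-increasing sequence of elements of `I`, so
`p(I) + p(S) ⊆ p(I)`. Hence `p(S)` is closed under addition and `p(I)` is an ideal of it;
`p(S)` is a numerical semigroup as soon as the gcd of its elements is `1`. That gcd divides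
every `c * aⱼ` with `c ∈ S` (the difference of the values of `p` on two step sequences), and
`S` contains two consecutive integers, so it divides `gcd(a₁,…,aₙ)`. Conversely, every element
of `p(I)` is a multiple of `gcd(a₁,…,aₙ)`, while an ideal of a numerical semigroup contains two
consecutive integers.
-/

namespace IsNumericalSemigroup

variable {S : Set ℤ}

theorem exists_forall_ge_mem (hS : IsNumericalSemigroup S) : ∃ G, ∀ z, G ≤ z → z ∈ S := by
  obtain ⟨B, hB⟩ := hS.2.2.2.bddAbove
  refine ⟨max B 0 + 1, fun z hz => by_contra fun hzS => ?_⟩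
  have : z ≤ B := hB ⟨by omega, hzS⟩
  omega

theorem isIdealOf_self (hS : IsNumericalSemigroup S) : IsIdealOf S S :=
  ⟨⟨0, hS.1⟩, subset_rfl, hS.2.2.1⟩

theorem of_forall_dvd (h0 : (0 : ℤ) ∈ S) (hnonneg : ∀ s ∈ S, 0 ≤ s)
    (hadd : ∀ a ∈ S, ∀ b ∈ S, a + b ∈ S) (hgcd : ∀ d : ℤ, (∀ s ∈ S, d ∣ s) → d ∣ 1) :
    IsNumericalSemigroup S := by
  set X : Set ℕ := {m | (m : ℤ) ∈ S}
  have hX : ∀ m ∈ AddSubmonoid.closure X, (m : ℤ) ∈ S := fun m hm =>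
    AddSubmonoid.closure_induction (fun _ hk => hk) (by simpa using h0)
      (fun k l _ _ hk hl => by simpa using hadd _ hk _ hl) hm
  have hgcdX : Nat.setGcd X = 1 := by
    refine Nat.dvd_one.mp (Int.natCast_dvd_natCast.mp (hgcd _ fun s hs => ?_))
    lift s to ℕ using hnonneg s hs
    exact Int.natCast_dvd_natCast.mpr (Nat.setGcd_dvd_of_mem hs)
  obtain ⟨N, hN⟩ := Nat.exists_mem_closure_of_ge X
  refine ⟨h0, hnonneg, hadd, (Set.finite_Ico (0 : ℤ) N).subset ?_⟩
  rintro z ⟨hz, hzS⟩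
  lift z to ℕ using hz
  refine ⟨Nat.cast_nonneg z, Nat.cast_lt.mpr (lt_of_not_ge fun hNz => hzS ?_)⟩
  exact hX z (hN z hNz (hgcdX ▸ one_dvd z))

end IsNumericalSemigroup

theorem IsIdealOf.dvd_one_of_forall_dvd {P T : Set ℤ} {d : ℤ} (hT : IsNumericalSemigroup T)
    (hP : IsIdealOf P T) (hd : ∀ y ∈ P, d ∣ y) : d ∣ 1 := by
  obtain ⟨x, hx⟩ := hP.1
  obtain ⟨G, hG⟩ := hT.exists_forall_ge_mem
  have h₁ := hd _ (hP.2.2 x hx G (hG G le_rfl))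
  have h₂ := hd _ (hP.2.2 x hx (G + 1) (hG _ (by omega)))
  simpa using dvd_sub h₂ h₁

section patternImage

variable {n : ℕ} {a : Fin n → ℤ} {I S : Set ℤ}

theorem gcd_dvd_of_mem_patternImage {y : ℤ} (hy : y ∈ patternImage a 0 I) :
    univ.gcd a ∣ y := by
  obtain ⟨s, -, -, rfl⟩ := hy
  exact dvd_add (dvd_sum fun i hi => (gcd_dvd hi).mul_right _) (dvd_zero _)

theorem patternImage_add_mem (hI : IsIdealOf I S) {y z : ℤ} (hy : y ∈ patternImage a 0 I)
    (hz : z ∈ patternImage a 0 S) : y + z ∈ patternImage a 0 I := by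
  obtain ⟨s, hs, hsI, rfl⟩ := hy
  obtain ⟨m, hm, hmS, rfl⟩ := hz
  refine ⟨s + m, hs.add hm, fun i => hI.2.2 _ (hsI i) _ (hmS i), ?_⟩
  simp [mul_add, sum_add_distrib]

theorem isIdealOf_patternImage (hI : IsIdealOf I S) :
    IsIdealOf (patternImage a 0 I) (patternImage a 0 S) := by
  obtain ⟨x, hx⟩ := hI.1
  refine ⟨⟨_, fun _ => x, antitone_const, fun _ => hx, rfl⟩, ?_, fun y hy z hz =>
    patternImage_add_mem hI hy hz⟩
  rintro y ⟨s, hs, hsI, rfl⟩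
  exact ⟨s, hs, fun i => hI.2.1 (hsI i), rfl⟩

theorem dvd_mul_of_forall_dvd_patternImage (hS : IsNumericalSemigroup S) {c d : ℤ} (hc : c ∈ S)
    (hd : ∀ y ∈ patternImage a 0 S, d ∣ y) (j : Fin n) : d ∣ c * a j := by
  have hstep : ∀ k : ℕ, d ∣ ∑ i, a i * if (i : ℕ) < k then c else 0 := by
    intro k
    have hc₀ := hS.2.1 c hc
    refine (dvd_add_left (dvd_zero d)).mp (hd _ ⟨_, fun i i' hii' => ?_, fun i => ?_, rfl⟩)
    · have : (i : ℕ) ≤ i' := hii'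
      split_ifs <;> omega
    · split_ifs
      exacts [hc, hS.1]
  have hdiff : (∑ i, a i * if (i : ℕ) < j + 1 then c else 0)
      - (∑ i, a i * if (i : ℕ) < j then c else 0) = c * a j := by
    rw [← sum_sub_distrib, show c * a j = ∑ i, if j = i then c * a i else 0 by simp]
    refine sum_congr rfl fun i _ => ?_
    simp only [Fin.ext_iff]
    split_ifs <;> first | omega | ring
  exact hdiff ▸ dvd_sub (hstep _) (hstep _)

theorem dvd_gcd_of_forall_dvd_patternImage (hS : IsNumericalSemigroup S) {d : ℤ}
    (hd : ∀ y ∈ patternImage a 0 S, d ∣ y) : d ∣ univ.gcd a := by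
  obtain ⟨G, hG⟩ := hS.exists_forall_ge_mem
  refine dvd_gcd fun j _ => ?_
  have h₁ := dvd_mul_of_forall_dvd_patternImage hS (hG G le_rfl) hd j
  have h₂ := dvd_mul_of_forall_dvd_patternImage hS (hG (G + 1) (by omega)) hd j
  simpa [add_mul] using dvd_sub h₂ h₁

theorem isNumericalSemigroup_patternImage
    (hadm : ∀ s : Fin n → ℤ, Antitone s → (∀ i, 0 ≤ s i) → 0 ≤ ∑ i, a i * s i)
    (hS : IsNumericalSemigroup S) (hgcd : univ.gcd a = 1) :
    IsNumericalSemigroup (patternImage a 0 S) := by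
  refine .of_forall_dvd ⟨fun _ => 0, antitone_const, fun _ => hS.1, by simp⟩ ?_
    (fun y hy z hz => patternImage_add_mem hS.isIdealOf_self hy hz)
    (fun d hd => hgcd ▸ dvd_gcd_of_forall_dvd_patternImage hS hd)
  rintro y ⟨s, hs, hsS, rfl⟩
  simpa using hadm s hs fun i => hS.2.1 _ (hsS i)

end patternImage

theorem stmt1_general {n : ℕ} (a : Fin n → ℤ)
    (hadm : ∀ s : Fin n → ℤ, Antitone s → (∀ i, 0 ≤ s i) → 0 ≤ ∑ i, a i * s i)
    (S I : Set ℤ) (hS : IsNumericalSemigroup S) (hI : IsIdealOf I S) :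
    (∃ T : Set ℤ, IsNumericalSemigroup T ∧ IsIdealOf (patternImage a 0 I) T) ↔
      Finset.univ.gcd a = 1 := by
  constructor
  · rintro ⟨T, hT, hP⟩
    exact Int.eq_one_of_dvd_one (Int.nonneg_of_normalize_eq_self (normalize_gcd ..))
      (hP.dvd_one_of_forall_dvd hT fun _ => gcd_dvd_of_mem_patternImage)
  · exact fun hgcd =>
      ⟨_, isNumericalSemigroup_patternImage hadm hS hgcd, isIdealOf_patternImage hI⟩

/-- If the homogeneous linear pattern `a₁X₁+⋯+aₙXₙ` is admitted by ℤ₊ and `I` is an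
ideal of a numerical semigroup `S`, then `p(I)` is an ideal of some numerical
semigroup iff `gcd(a₁,…,aₙ) = 1`. -/
theorem stmt1 {n : ℕ} (hn : 0 < n) (a : Fin n → ℤ)
    (hadm : ∀ s : Fin n → ℤ, Antitone s → (∀ i, 0 ≤ s i) → 0 ≤ ∑ i, a i * s i)
    (S I : Set ℤ) (hS : IsNumericalSemigroup S) (hI : IsIdealOf I S) :
    (∃ T : Set ℤ, IsNumericalSemigroup T ∧ IsIdealOf (patternImage a 0 I) T) ↔
      Finset.univ.gcd a = 1 :=
  stmt1_general a hadm S I hS hI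
end

section
/- Let p(X₁,…,Xₙ) = a₁X₁ + ⋯ + aₙXₙ + a₀ be a premonic linear pattern admitted by an ideal I of a numerical semigroup S. Then p(I) is an ideal of S, i.e., p(I) is a nonempty subset of S satisfying p(I) + S ⊆ p(I). -/
/-! Raising the first `k` entries of a non-increasing sequence of `I` by `t ∈ S` keeps it
non-increasing and inside `I`, and since the first `k` coefficients sum to `1` it raises the
value of the pattern by exactly `t`. -/

open Finset

theorem antitone_indicator_const_of_isLowerSet {ι α : Type*} [Preorder ι] [Preorder α] [Zero α]
    {L : Set ι} (hL : IsLowerSet L) {t : α} (ht : 0 ≤ t) :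
    Antitone (L.indicator fun _ => t) := by
  intro i j hij
  by_cases hj : j ∈ L
  · simp [hL hij hj, hj]
  · by_cases hi : i ∈ L <;> simp [hi, hj, ht]

theorem sum_mul_add_indicator_const {ι R : Type*} [Fintype ι] [CommSemiring R]
    (a s : ι → R) (L : Set ι) [DecidablePred (· ∈ L)] (t : R) :
    ∑ i, a i * (s i + L.indicator (fun _ => t) i) =
      ∑ i, a i * s i + (∑ i ∈ univ.filter (· ∈ L), a i) * t := by
  simp only [mul_add, sum_add_distrib, sum_mul, sum_filter, Set.indicator_apply, mul_ite,
    ite_mul, mul_zero, zero_mul]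

theorem patternImage_nonempty {n : ℕ} (a : Fin n → ℤ) (a₀ : ℤ) {I : Set ℤ} (hI : I.Nonempty) :
    (patternImage a a₀ I).Nonempty := by
  obtain ⟨x, hx⟩ := hI
  exact ⟨_, fun _ => x, antitone_const, fun _ => hx, rfl⟩

theorem patternImage_subset_of_admittedBy {n : ℕ} {a : Fin n → ℤ} {a₀ : ℤ} {I S : Set ℤ}
    (hadm : AdmittedBy a a₀ I S) : patternImage a a₀ I ⊆ S := by
  rintro y ⟨s, hs, hsI, rfl⟩
  exact hadm s hs hsI

theorem Premonic.add_mem_patternImage {n : ℕ} {a : Fin n → ℤ} (hpre : Premonic a) (a₀ : ℤ)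
    {I : Set ℤ} {t : ℤ} (ht : 0 ≤ t) (hIt : ∀ x ∈ I, x + t ∈ I) {y : ℤ}
    (hy : y ∈ patternImage a a₀ I) : y + t ∈ patternImage a a₀ I := by
  obtain ⟨k, -, -, hk⟩ := hpre
  obtain ⟨s, hs, hsI, rfl⟩ := hy
  set L : Set (Fin n) := {i | (i : ℕ) < k}
  have hL : IsLowerSet L := fun i j hji hi => lt_of_le_of_lt (Fin.le_iff_val_le_val.mp hji) hi
  refine ⟨s + L.indicator fun _ => t, hs.add (antitone_indicator_const_of_isLowerSet hL ht),
    fun i => ?_, ?_⟩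
  · by_cases hi : i ∈ L
    · simpa [hi] using hIt _ (hsI i)
    · simpa [hi] using hsI i
  · rw [Pi.add_def, sum_mul_add_indicator_const]
    simp only [L, Set.mem_ofPred_eq, hk]
    ring

/-- If a premonic linear pattern is admitted by an ideal `I` of a numerical semigroup
`S`, then `p(I)` is an ideal of `S`. -/
theorem stmt4 {n : ℕ} (a : Fin n → ℤ) (a₀ : ℤ) (S I : Set ℤ)
    (hS : IsNumericalSemigroup S) (hI : IsIdealOf I S)
    (hadm : AdmittedBy a a₀ I S) (hpre : Premonic a) :
    IsIdealOf (patternImage a a₀ I) S :=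
  ⟨patternImage_nonempty a a₀ hI.1, patternImage_subset_of_admittedBy hadm,
    fun _ hy t ht => hpre.add_mem_patternImage a₀ (hS.2.1 t ht) (fun x hx => hI.2.2 x hx t ht) hy⟩
end

section
/- If p(X₁,…,Xₙ) = a₁X₁ + ⋯ + aₙXₙ + a₀ is a linear pattern admitted by an ideal I of a numerical semigroup S, then (i) a₁ + ⋯ + a_{n'} ≥ 0 for every 1 ≤ n' ≤ n, and (ii) a₁s₁ + ⋯ + aₙsₙ ≥ (a₁ + ⋯ + aₙ)·sₙ for every non-increasing sequence s₁ ≥ ⋯ ≥ sₙ of elements of I. -/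
/-!
Since `S` contains every large integer, the ideal `I` is unbounded above. Evaluating the
pattern at the non-increasing sequence that equals a large `T ∈ I` in the first `k` places
and a fixed `x ∈ I` in the others gives `(a₁ + ⋯ + a_k) T + O(1) ≥ 0`, which forces
`a₁ + ⋯ + a_k ≥ 0`. Part (ii) is then Abel summation:
`∑ aᵢ sᵢ - (∑ aᵢ) sₙ = ∑_{k<n} (s_k - s_{k+1}) (a₁ + ⋯ + a_k)`, a sum of nonnegative terms.
-/

open Finset

theorem IsNumericalSemigroup.exists_forall_ge_mem_s5 {S : Set ℤ} (hS : IsNumericalSemigroup S) :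
    ∃ N, ∀ z, N ≤ z → z ∈ S := by
  obtain ⟨B, hB⟩ := hS.2.2.2.bddAbove
  refine ⟨max 0 (B + 1), fun z hz => ?_⟩
  by_contra hzS
  have := hB ⟨(le_max_left _ _).trans hz, hzS⟩
  omega

theorem IsIdealOf.exists_mem_ge {I S : Set ℤ} (hS : IsNumericalSemigroup S) (hI : IsIdealOf I S)
    (N : ℤ) : ∃ x ∈ I, N ≤ x := by
  obtain ⟨⟨x, hx⟩, -, hadd⟩ := hI
  obtain ⟨M, hM⟩ := hS.exists_forall_ge_mem_s5
  exact ⟨x + max M (N - x), hadd x hx _ (hM _ (le_max_left _ _)), by omega⟩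

theorem Finset.sum_mul_ite {ι R : Type*} [NonUnitalNonAssocSemiring R] (s : Finset ι)
    (p : ι → Prop) [DecidablePred p] (a : ι → R) (T x : R) :
    ∑ i ∈ s, a i * (if p i then T else x) =
      (∑ i ∈ s.filter p, a i) * T + (∑ i ∈ s.filter (¬ p ·), a i) * x := by
  simp only [mul_ite, Finset.sum_ite, Finset.sum_mul]

theorem AdmittedBy.sum_filter_lt_nonneg {n : ℕ} {a : Fin n → ℤ} {a₀ : ℤ} {I S : Set ℤ}
    (hadm : AdmittedBy a a₀ I S) (hS : ∀ s ∈ S, 0 ≤ s) (hI : ∀ N, ∃ x ∈ I, N ≤ x) (k : ℕ) :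
    0 ≤ ∑ i ∈ univ.filter (fun i : Fin n => (i : ℕ) < k), a i := by
  by_contra! hneg
  obtain ⟨x, hx, -⟩ := hI 0
  set R := ∑ i ∈ univ.filter (fun i : Fin n => ¬ (i : ℕ) < k), a i
  obtain ⟨T, hT, hTge⟩ := hI (max (max x 0) (R * x + a₀ + 1))
  obtain ⟨⟨hxT, hT0⟩, hTlarge⟩ := by simpa only [max_le_iff] using hTge
  have hanti : Antitone fun i : Fin n => if (i : ℕ) < k then T else x := by
    intro i j hij
    have : (i : ℕ) ≤ j := hij
    dsimp only
    split_ifs <;> omega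
  have hval := hS _ (hadm _ hanti fun i => by split_ifs <;> assumption)
  rw [Finset.sum_mul_ite] at hval
  nlinarith

theorem sum_filter_castSucc_lt {R : Type*} [AddCommMonoid R] {n : ℕ} (a : Fin (n + 1) → R)
    (k : ℕ) : ∑ i ∈ univ.filter (fun i : Fin n => (i : ℕ) < k), a i.castSucc =
      ∑ i ∈ univ.filter (fun i : Fin (n + 1) => (i : ℕ) < min k n), a i := by
  simp [Finset.sum_filter, Fin.sum_univ_castSucc]

theorem sum_mul_last_le_sum_mul {R : Type*} [CommRing R] [LinearOrder R] [IsStrictOrderedRing R]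
    {n : ℕ} (a s : Fin (n + 1) → R) (hs : Antitone s)
    (ha : ∀ k : ℕ, 0 ≤ ∑ i ∈ univ.filter (fun i : Fin (n + 1) => (i : ℕ) < k), a i) :
    (∑ i, a i) * s (Fin.last n) ≤ ∑ i, a i * s i := by
  induction n with
  | zero => simp
  | succ n ih =>
    have ha' (k : ℕ) : 0 ≤ ∑ i ∈ univ.filter (fun i : Fin (n + 1) => (i : ℕ) < k),
        a i.castSucc := by
      rw [sum_filter_castSucc_lt]; exact ha _
    have hsum : 0 ≤ ∑ i : Fin (n + 1), a i.castSucc := by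
      simpa only [Finset.filter_true_of_mem fun (i : Fin (n + 1)) _ => i.isLt] using ha' (n + 1)
    rw [Fin.sum_univ_castSucc, Fin.sum_univ_castSucc (fun i => a i * s i), add_mul]
    gcongr
    calc (∑ i : Fin (n + 1), a i.castSucc) * s (Fin.last (n + 1))
        ≤ (∑ i : Fin (n + 1), a i.castSucc) * s (Fin.last n).castSucc :=
          mul_le_mul_of_nonneg_left (hs (Fin.le_last _)) hsum
      _ ≤ ∑ i : Fin (n + 1), a i.castSucc * s i.castSucc :=
          ih _ _ (hs.comp_monotone fun _ _ => Fin.castSucc_le_castSucc_iff.mpr) ha'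

/-- If a linear pattern is admitted by an ideal `I` of a numerical semigroup `S`,
then all initial partial sums of coefficients are nonnegative, and
`∑ aᵢ sᵢ ≥ (∑ aᵢ) sₙ` for every non-increasing sequence of elements of `I`. -/
theorem stmt5 {n : ℕ} (hn : 0 < n) (a : Fin n → ℤ) (a₀ : ℤ) (S I : Set ℤ)
    (hS : IsNumericalSemigroup S) (hI : IsIdealOf I S)
    (hadm : AdmittedBy a a₀ I S) :
    (∀ k : ℕ, 1 ≤ k → k ≤ n →
        0 ≤ ∑ i ∈ Finset.univ.filter (fun i : Fin n => (i : ℕ) < k), a i) ∧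
    (∀ s : Fin n → ℤ, Antitone s → (∀ i, s i ∈ I) →
        (∑ i, a i) * s ⟨n - 1, by omega⟩ ≤ ∑ i, a i * s i) := by
  have hprefix := hadm.sum_filter_lt_nonneg hS.2.1 (hI.exists_mem_ge hS)
  refine ⟨fun k _ _ => hprefix k, fun s hs _ => ?_⟩
  obtain ⟨m, rfl⟩ := Nat.exists_eq_add_one_of_ne_zero hn.ne'
  exact sum_mul_last_le_sum_mul a s hs hprefix
end

section
/- Let p(X₁,…,Xₙ) = a₁X₁ + ⋯ + aₙXₙ + a₀ be a linear pattern admitted by a numerical semigroup S that is a surjective endopattern of S, that is, p(S) = S. Then p is homogeneous, i.e., a₀ = 0. -/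
open Finset

/-! Evaluating the pattern at `0, …, 0` shows `a₀ ∈ S`. Surjectivity gives a non-increasing
sequence `s` of elements of `S` with `p(s) = 0`; then `s + s` is again admissible and
`p(s + s) = 2 p(s) - a₀ = -a₀` lies in `S`. Both `a₀` and `-a₀` are nonnegative. -/

theorem AdmittedBy.const_mem {n : ℕ} {a : Fin n → ℤ} {a₀ : ℤ} {I S : Set ℤ}
    (hadm : AdmittedBy a a₀ I S) (h0 : (0 : ℤ) ∈ I) : a₀ ∈ S := by
  simpa using hadm (fun _ => 0) antitone_const (fun _ => h0)

theorem AdmittedBy.two_mul_sub_mem {n : ℕ} {a : Fin n → ℤ} {a₀ : ℤ} {S T : Set ℤ}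
    (hadm : AdmittedBy a a₀ S T) (hadd : ∀ x ∈ S, ∀ y ∈ S, x + y ∈ S) {y : ℤ}
    (hy : y ∈ patternImage a a₀ S) : 2 * y - a₀ ∈ T := by
  obtain ⟨s, hanti, hmem, rfl⟩ := hy
  have hdouble : ∑ i, a i * (s + s) i + a₀ = 2 * (∑ i, a i * s i + a₀) - a₀ := by
    simp only [Pi.add_apply, mul_add, sum_add_distrib]
    ring
  rw [← hdouble]
  exact hadm _ (hanti.add hanti) fun i => hadd _ (hmem i) _ (hmem i)

/-- A linear surjective endopattern of a numerical semigroup `S` (a pattern admitted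
by `S` with `p(S) = S`) is necessarily homogeneous, i.e. `a₀ = 0`. -/
theorem stmt6 {n : ℕ} (a : Fin n → ℤ) (a₀ : ℤ) (S : Set ℤ)
    (hS : IsNumericalSemigroup S) (hadm : AdmittedBy a a₀ S S)
    (hsur : patternImage a a₀ S = S) :
    a₀ = 0 := by
  obtain ⟨h0, hnonneg, hadd, -⟩ := hS
  have hpos : 0 ≤ a₀ := hnonneg _ (hadm.const_mem h0)
  have hneg : 0 ≤ 2 * 0 - a₀ := hnonneg _ (hadm.two_mul_sub_mem hadd (hsur.symm ▸ h0))
  omega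
end

section
/- Let p(X₁,…,Xₙ) = a₁X₁ + ⋯ + aₙXₙ + a₀ be a linear endopattern of a proper ideal I of a numerical semigroup S, i.e., p(s₁,…,sₙ) ∈ I for every non-increasing sequence s₁ ≥ ⋯ ≥ sₙ of elements of I. Then, writing μ(I) = min I: a₁ + ⋯ + a_{n'} ≥ 0 for every 1 ≤ n' ≤ n, (a₁ + ⋯ + aₙ)·μ(I) + a₀ ≥ 0, and additionally either a₀ > 0, or both a₁ + ⋯ + aₙ > 0 and (a₁ + ⋯ + aₙ)·μ(I) + a₀ > 0. -/
open Finset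

/-!
Evaluating the pattern on the constant sequence `μ` gives an element of `I`, hence a value
`≥ μ > 0` (a proper ideal misses `0`). Evaluating it on `T, …, T, μ, …, μ` (the first `k`
entries equal to `T`) gives `A T + c ≥ μ` with `A` the `k`-th partial sum, for arbitrarily large
`T ∈ I` (a numerical semigroup is cofinite), which forces `A ≥ 0`.
-/

theorem nonneg_of_forall_exists_le_mul_add {A c m : ℤ}
    (h : ∀ N : ℤ, ∃ T, N ≤ T ∧ m ≤ A * T + c) : 0 ≤ A := by
  obtain ⟨T, hNT, hT⟩ := h (max 0 (c - m + 1))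
  by_contra! hA
  nlinarith [le_max_left 0 (c - m + 1), le_max_right 0 (c - m + 1)]

theorem IsNumericalSemigroup.exists_mem_le {S : Set ℤ} (hS : IsNumericalSemigroup S) (N : ℤ) :
    ∃ z ∈ S, N ≤ z := by
  obtain ⟨b, hb⟩ := hS.2.2.2.bddAbove
  refine ⟨max N (max b 0 + 1), ?_, le_max_left _ _⟩
  by_contra hz
  have := hb ⟨by omega, hz⟩
  omega

theorem IsIdealOf.exists_mem_le {I S : Set ℤ} (hI : IsIdealOf I S)
    (hS : ∀ N : ℤ, ∃ z ∈ S, N ≤ z) (N : ℤ) : ∃ x ∈ I, N ≤ x := by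
  obtain ⟨y, hy⟩ := hI.1
  obtain ⟨z, hzS, hNz⟩ := hS (N - y)
  exact ⟨y + z, hI.2.2 y hy z hzS, by omega⟩

theorem IsIdealOf.eq_of_zero_mem {I S : Set ℤ} (hI : IsIdealOf I S) (h0 : (0 : ℤ) ∈ I) :
    I = S :=
  hI.2.1.antisymm fun s hs => by simpa using hI.2.2 0 h0 s hs

theorem IsIdealOf.pos_of_mem {I S : Set ℤ} (hS : IsNumericalSemigroup S) (hI : IsIdealOf I S)
    (hproper : I ≠ S) {x : ℤ} (hx : x ∈ I) : 0 < x := by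
  refine (hS.2.1 x (hI.2.1 hx)).lt_of_ne ?_
  rintro rfl
  exact hproper (hI.eq_of_zero_mem hx)

namespace AdmittedBy

variable {n : ℕ} {a : Fin n → ℤ} {a₀ : ℤ} {I J : Set ℤ}

theorem sum_mul_add_mem (h : AdmittedBy a a₀ I J) {x : ℤ} (hx : x ∈ I) :
    (∑ i, a i) * x + a₀ ∈ J := by
  simpa [Finset.sum_mul] using h (fun _ => x) antitone_const fun _ => hx

theorem step_mem (h : AdmittedBy a a₀ I J) (k : ℕ) {x y : ℤ} (hx : x ∈ I) (hy : y ∈ I)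
    (hyx : y ≤ x) :
    (∑ i ∈ univ.filter (fun i : Fin n => (i : ℕ) < k), a i) * x +
      (∑ i ∈ univ.filter (fun i : Fin n => ¬(i : ℕ) < k), a i) * y + a₀ ∈ J := by
  have hanti : Antitone fun i : Fin n => if (i : ℕ) < k then x else y := by
    intro i j hij
    dsimp only
    split_ifs with hj hi <;> first | rfl | exact hyx | omega
  convert h _ hanti fun i => by split_ifs <;> assumption using 2
  simp only [mul_ite, Finset.sum_ite, ← Finset.sum_mul]

theorem partial_sum_nonneg (h : AdmittedBy a a₀ I J) (hJ : BddBelow J)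
    (hI : ∀ N : ℤ, ∃ x ∈ I, N ≤ x) {y : ℤ} (hy : y ∈ I) (k : ℕ) :
    0 ≤ ∑ i ∈ univ.filter (fun i : Fin n => (i : ℕ) < k), a i := by
  obtain ⟨m, hm⟩ := hJ
  refine nonneg_of_forall_exists_le_mul_add
    (c := (∑ i ∈ univ.filter (fun i : Fin n => ¬(i : ℕ) < k), a i) * y + a₀) (m := m) fun N => ?_
  obtain ⟨x, hx, hNx⟩ := hI (max N y)
  exact ⟨x, (le_max_left _ _).trans hNx,
    by simpa only [add_assoc] using hm (h.step_mem k hx hy ((le_max_right _ _).trans hNx))⟩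

end AdmittedBy

/-- A linear endopattern of a proper ideal `I` of a numerical semigroup `S`
satisfies: all initial partial sums of coefficients are nonnegative,
`(∑ aᵢ)·μ(I) + a₀ ≥ 0`, and additionally either `a₀ > 0` or both `∑ aᵢ > 0` and
`(∑ aᵢ)·μ(I) + a₀ > 0`. -/
theorem stmt8 {n : ℕ} (a : Fin n → ℤ) (a₀ : ℤ) (S I : Set ℤ) (μ : ℤ)
    (hS : IsNumericalSemigroup S) (hI : IsIdealOf I S) (hproper : I ≠ S)
    (hμ : IsLeast I μ) (hendo : AdmittedBy a a₀ I I) :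
    (∀ k : ℕ, 1 ≤ k → k ≤ n →
        0 ≤ ∑ i ∈ Finset.univ.filter (fun i : Fin n => (i : ℕ) < k), a i) ∧
    0 ≤ (∑ i, a i) * μ + a₀ ∧
    (0 < a₀ ∨ (0 < ∑ i, a i ∧ 0 < (∑ i, a i) * μ + a₀)) := by
  have hμpos : 0 < μ := hI.pos_of_mem hS hproper hμ.1
  have hconst : 0 < (∑ i, a i) * μ + a₀ :=
    hI.pos_of_mem hS hproper (hendo.sum_mul_add_mem hμ.1)
  refine ⟨fun k _ _ => hendo.partial_sum_nonneg ⟨μ, hμ.2⟩ (hI.exists_mem_le hS.exists_mem_le)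
    hμ.1 k, hconst.le, ?_⟩
  by_cases ha₀ : 0 < a₀
  · exact Or.inl ha₀
  · exact Or.inr ⟨pos_of_mul_pos_left (by omega) hμpos.le, hconst⟩
end

section
/- Let p(X₁,…,Xₙ) = a₁X₁ + ⋯ + aₙXₙ + a₀ be a linear pattern admitted by the maximal ideal M(S) of a numerical semigroup S. Then p is an endopattern of M(S), i.e., p(M(S)) ⊆ M(S), if and only if a₀ > 0, or both a₁ + ⋯ + aₙ > 0 and (a₁ + ⋯ + aₙ)·m(S) + a₀ > 0. -/
/-!
Admissibility forces every initial partial sum `a₁ + ⋯ + aⱼ` to be nonnegative: otherwise the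
sequence equal to a huge element of `M(S)` in the first `j` places and to a fixed element
afterwards is sent below `0`. By Abel summation, nonnegative partial sums make
`∑ aᵢ sᵢ ≥ (∑ aᵢ) m` on every non-increasing sequence `sᵢ ≥ m`, so the least value of the
pattern on `M(S)` is `p(m, …, m) = (∑ aᵢ) m + a₀`, which settles the case `∑ aᵢ > 0`.
When `a₀ > 0`, a zero value `p(s) = 0` is impossible because then `p(2s) = -a₀ < 0`.
-/

open Finset

theorem Finset.sum_mul_nonneg_of_antitone {ι R : Type*} [LinearOrder ι] [CommRing R]
    [PartialOrder R] [IsOrderedRing R] (s : Finset ι) {a t : ι → R}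
    (ha : ∀ j ∈ s, 0 ≤ ∑ i ∈ s with i ≤ j, a i) (ht : Antitone t) (ht₀ : ∀ i ∈ s, 0 ≤ t i) :
    0 ≤ ∑ i ∈ s, a i * t i := by
  induction s using Finset.induction_on_max generalizing t with
  | empty => simp
  | insert c s hc ih =>
    have hcs : c ∉ s := fun h => lt_irrefl c (hc c h)
    have hfilter : ∀ j ∈ s, {i ∈ insert c s | i ≤ j} = {i ∈ s | i ≤ j} := fun j hj => by
      rw [filter_insert, if_neg (not_le.2 (hc j hj))]
    have hall : {i ∈ insert c s | i ≤ c} = insert c s :=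
      filter_true_of_mem fun i hi => (mem_insert.1 hi).elim le_of_eq fun h => (hc i h).le
    -- Abel summation: peel off the last index, lowering the remaining weights by `t c`.
    have habel : ∑ i ∈ insert c s, a i * t i
        = ∑ i ∈ s, a i * (t i - t c) + (∑ i ∈ insert c s, a i) * t c := by
      simp only [sum_insert hcs, add_mul, sum_mul, mul_sub, sum_sub_distrib]
      abel
    rw [habel]
    refine add_nonneg (ih (fun j hj => ?_) (fun i j hij => sub_le_sub_right (ht hij) _)
      fun i hi => sub_nonneg.2 (ht (hc i hi).le)) (mul_nonneg ?_ (ht₀ c (mem_insert_self c s)))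
    · rw [← hfilter j hj]
      exact ha j (mem_insert_of_mem hj)
    · simpa only [hall] using ha c (mem_insert_self c s)

theorem sum_mul_le_sum_mul_of_antitone {ι R : Type*} [Fintype ι] [LinearOrder ι] [CommRing R]
    [PartialOrder R] [IsOrderedRing R] {a s : ι → R} {m : R}
    (ha : ∀ j, 0 ≤ ∑ i with i ≤ j, a i) (hs : Antitone s) (hm : ∀ i, m ≤ s i) :
    (∑ i, a i) * m ≤ ∑ i, a i * s i := by
  have := univ.sum_mul_nonneg_of_antitone (t := fun i => s i - m) (fun j _ => ha j)
    (fun i j hij => sub_le_sub_right (hs hij) m) fun i _ => sub_nonneg.2 (hm i)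
  simpa only [mul_sub, sum_sub_distrib, ← sum_mul, sub_nonneg] using this

theorem sum_mul_ite_le {ι R : Type*} [Fintype ι] [LinearOrder ι] [CommRing R]
    (a : ι → R) (j : ι) (x y : R) :
    ∑ i, a i * (if i ≤ j then x else y) = (∑ i, a i) * y + (∑ i with i ≤ j, a i) * (x - y) := by
  have hsplit : ∀ i, a i * (if i ≤ j then x else y)
      = a i * y + (if i ≤ j then a i else 0) * (x - y) := fun i => by
    split_ifs <;> ring
  simp only [hsplit, sum_add_distrib, ← sum_mul, ← sum_filter]

namespace IsNumericalSemigroup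

variable {S : Set ℤ}

theorem nonneg (hS : IsNumericalSemigroup S) {x : ℤ} (hx : x ∈ S) : 0 ≤ x :=
  hS.2.1 x hx

theorem mem_diff_zero_iff (hS : IsNumericalSemigroup S) {x : ℤ} :
    x ∈ S \ {0} ↔ x ∈ S ∧ 0 < x := by
  simp only [Set.mem_sdiff, Set.mem_singleton_iff, and_congr_right_iff]
  exact fun hx => (hS.nonneg hx).lt_iff_ne'.symm

theorem add_self_mem_diff_zero (hS : IsNumericalSemigroup S) {x : ℤ} (hx : x ∈ S \ {0}) :
    x + x ∈ S \ {0} := by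
  rw [hS.mem_diff_zero_iff] at hx ⊢
  exact ⟨hS.2.2.1 x hx.1 x hx.1, by linarith [hx.2]⟩

theorem exists_forall_ge_mem_diff_zero (hS : IsNumericalSemigroup S) :
    ∃ C, ∀ x, C ≤ x → x ∈ S \ {0} := by
  obtain ⟨C, hC⟩ := hS.2.2.2.bddAbove
  refine ⟨max C 0 + 1, fun x hx => hS.mem_diff_zero_iff.2 ⟨?_, by omega⟩⟩
  by_contra hxS
  have := hC ⟨by omega, hxS⟩
  omega

end IsNumericalSemigroup

namespace AdmittedBy

variable {n : ℕ} {a : Fin n → ℤ} {a₀ : ℤ} {S : Set ℤ}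

theorem sum_filter_le_nonneg (hS : IsNumericalSemigroup S)
    (hadm : AdmittedBy a a₀ (S \ {0}) S) (j : Fin n) : 0 ≤ ∑ i with i ≤ j, a i := by
  obtain ⟨C, hC⟩ := hS.exists_forall_ge_mem_diff_zero
  set x := C + |(∑ i, a i) * C + a₀| + 1
  have hCx : C ≤ x := by linarith [abs_nonneg ((∑ i, a i) * C + a₀)]
  have hval := hS.nonneg <| hadm (fun i => if i ≤ j then x else C)
    (fun i i' hii' => by
      dsimp only
      split_ifs with hi' hi
      exacts [le_rfl, absurd (hii'.trans hi') hi, hCx, le_rfl])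
    fun i => hC _ (by split_ifs; exacts [hCx, le_rfl])
  rw [sum_mul_ite_le] at hval
  by_contra! hneg
  have hB : (∑ i with i ≤ j, a i) * (x - C) ≤ -1 * (x - C) :=
    mul_le_mul_of_nonneg_right (by omega) (sub_nonneg.2 hCx)
  linarith [le_abs_self ((∑ i, a i) * C + a₀)]

theorem ne_zero_of_pos (hS : IsNumericalSemigroup S) (hadm : AdmittedBy a a₀ (S \ {0}) S)
    (ha₀ : 0 < a₀) {s : Fin n → ℤ} (hs : Antitone s) (hsM : ∀ i, s i ∈ S \ {0}) :
    ∑ i, a i * s i + a₀ ≠ 0 := by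
  intro hzero
  have hdouble := hS.nonneg <| hadm (fun i => s i + s i) (hs.add hs)
    fun i => hS.add_self_mem_diff_zero (hsM i)
  simp only [mul_add, sum_add_distrib] at hdouble
  linarith

end AdmittedBy

/-- A linear pattern admitted by the maximal ideal `M(S) = S \ {0}` of a numerical
semigroup `S` is an endopattern of `M(S)` iff `a₀ > 0`, or both `∑ aᵢ > 0` and
`(∑ aᵢ)·m(S) + a₀ > 0`. -/
theorem stmt9 {n : ℕ} (a : Fin n → ℤ) (a₀ : ℤ) (S : Set ℤ) (m : ℤ)
    (hS : IsNumericalSemigroup S) (hm : IsLeast (S \ {0}) m)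
    (hadm : AdmittedBy a a₀ (S \ {0}) S) :
    AdmittedBy a a₀ (S \ {0}) (S \ {0}) ↔
      0 < a₀ ∨ (0 < ∑ i, a i ∧ 0 < (∑ i, a i) * m + a₀) := by
  have hpartial := hadm.sum_filter_le_nonneg hS
  have hsum : 0 ≤ ∑ i, a i := by
    simpa using univ.sum_mul_nonneg_of_antitone (t := 1) (fun j _ => hpartial j)
      antitone_const fun _ _ => zero_le_one
  constructor
  · intro hendo
    have hconst := (hS.mem_diff_zero_iff.1 (hendo (fun _ => m) antitone_const fun _ => hm.1)).2
    rw [← sum_mul] at hconst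
    rcases hsum.lt_or_eq with hpos | hzero
    · exact Or.inr ⟨hpos, hconst⟩
    · rw [← hzero, zero_mul, zero_add] at hconst
      exact Or.inl hconst
  · rintro h s hs hsM
    refine hS.mem_diff_zero_iff.2 ⟨hadm s hs hsM, ?_⟩
    rcases h with ha₀ | ⟨-, hmin⟩
    · exact (hS.nonneg (hadm s hs hsM)).lt_of_ne' (hadm.ne_zero_of_pos hS ha₀ hs hsM)
    · linarith [sum_mul_le_sum_mul_of_antitone hpartial hs fun i => hm.2 (hsM i)]
end

section
/- Let S be a numerical semigroup with S ≠ ℤ₊ and let a₀ be an integer with a₀ ∉ M(S). Then there is no monic linear pattern p(X₁,…,Xₙ) = a₁X₁ + ⋯ + aₙXₙ + a₀ (with a₁ = 1) admitted by S or by its maximal ideal M(S) satisfying (a₁ + ⋯ + aₙ)·m(S) = max(0, −a₀). -/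
open Finset

/-! On the sequence `(m + t, m, …, m)` a monic pattern with `(∑ aᵢ)·m = max(0, -a₀)` takes the
value `t + max(a₀, 0)`. For `a₀ > 0` and `t = 0` this puts `a₀` in `M(S)`; for `a₀ ≤ 0`, taking
`t` to be the Frobenius number of `S` (which exists as `S ≠ ℤ₊`) puts that gap in `S`. -/

theorem IsNumericalSemigroup.exists_frobenius {S : Set ℤ} (hS : IsNumericalSemigroup S)
    (hSne : S ≠ {z : ℤ | 0 ≤ z}) : ∃ F, 0 ≤ F ∧ F ∉ S ∧ ∀ z, F < z → z ∈ S := by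
  obtain ⟨-, hnonneg, -, hfin⟩ := hS
  have hgaps : {z : ℤ | 0 ≤ z ∧ z ∉ S}.Nonempty := by
    obtain ⟨z, hz, hzS⟩ := Set.not_subset.mp fun h => hSne (Set.Subset.antisymm hnonneg h)
    exact ⟨z, hz, hzS⟩
  obtain ⟨F, ⟨hF0, hFS⟩, hFmax⟩ := Set.exists_max_image _ id hfin hgaps
  refine ⟨F, hF0, hFS, fun z hz => ?_⟩
  by_contra hzS
  exact absurd (hFmax z ⟨by omega, hzS⟩) (not_le.mpr hz)

theorem sum_mul_const_add_single {ι : Type*} [Fintype ι] [DecidableEq ι] (a : ι → ℤ)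
    (i₀ : ι) (m t : ℤ) :
    ∑ i, a i * (m + (Pi.single i₀ t : ι → ℤ) i) = (∑ i, a i) * m + a i₀ * t := by
  simp [mul_add, Finset.sum_add_distrib, Finset.sum_mul, Pi.single_apply]

theorem antitone_const_add_single_zero {n : ℕ} (hn : 0 < n) (m : ℤ) {t : ℤ} (ht : 0 ≤ t) :
    Antitone fun i : Fin n => m + (Pi.single ⟨0, hn⟩ t : Fin n → ℤ) i := by
  intro i j hij
  by_cases hj : j = ⟨0, hn⟩
  · subst hj
    have hi : i = ⟨0, hn⟩ := Fin.ext (Nat.le_zero.mp hij)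
    simp [hi]
  · simp only [Pi.single_apply, hj, if_false]
    split_ifs <;> omega

namespace AdmittedBy

variable {n : ℕ} {a : Fin n → ℤ} {a₀ : ℤ} {I S : Set ℤ}

theorem mono_left (h : AdmittedBy a a₀ I S) {J : Set ℤ} (hJ : J ⊆ I) : AdmittedBy a a₀ J S :=
  fun s hs hsJ => h s hs fun i => hJ (hsJ i)

theorem sum_mul_add_add_mem (h : AdmittedBy a a₀ I S) (hn : 0 < n) (hmonic : a ⟨0, hn⟩ = 1)
    {m t : ℤ} (ht : 0 ≤ t) (hm : m ∈ I) (hmt : m + t ∈ I) : (∑ i, a i) * m + t + a₀ ∈ S := by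
  have hmem : ∀ i, m + (Pi.single ⟨0, hn⟩ t : Fin n → ℤ) i ∈ I := by
    intro i
    by_cases hi : i = ⟨0, hn⟩
    · simpa [hi] using hmt
    · simpa [Pi.single_apply, hi] using hm
  simpa [sum_mul_const_add_single, hmonic] using
    h _ (antitone_const_add_single_zero hn m ht) hmem

end AdmittedBy

/-- If `S ≠ ℤ₊` and `a₀ ∉ M(S)`, there is no monic linear pattern with constant term
`a₀` admitted by `S` or by `M(S)` satisfying `(∑ aᵢ)·m(S) = max(0, −a₀)`. -/
theorem stmt10 (S : Set ℤ) (hS : IsNumericalSemigroup S)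
    (hSne : S ≠ {z : ℤ | 0 ≤ z}) (m : ℤ) (hm : IsLeast (S \ {0}) m)
    (a₀ : ℤ) (ha₀ : a₀ ∉ S \ {0})
    {n : ℕ} (hn : 0 < n) (a : Fin n → ℤ) (hmonic : a ⟨0, hn⟩ = 1)
    (hadm : AdmittedBy a a₀ S S ∨ AdmittedBy a a₀ (S \ {0}) S) :
    (∑ i, a i) * m ≠ max 0 (-a₀) := by
  intro heq
  obtain ⟨⟨hmS, hm0⟩, -⟩ := hm
  have hm_pos : 0 < m := lt_of_le_of_ne (hS.2.1 m hmS) (Ne.symm hm0)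
  have hadm : AdmittedBy a a₀ (S \ {0}) S := hadm.elim (·.mono_left Set.sdiff_subset) id
  have hvalue : ∀ t, 0 ≤ t → m + t ∈ S → t + max a₀ 0 ∈ S := fun t ht hmt => by
    have := hadm.sum_mul_add_add_mem hn hmonic ht ⟨hmS, hm0⟩
      ⟨hmt, by rw [Set.mem_singleton_iff]; omega⟩
    rwa [heq, show max 0 (-a₀) + t + a₀ = t + max a₀ 0 by omega] at this
  rcases le_or_gt a₀ 0 with ha | ha
  · obtain ⟨F, hF0, hFS, hFgt⟩ := hS.exists_frobenius hSne
    exact hFS (by simpa [max_eq_right ha] using hvalue F hF0 (hFgt _ (by omega)))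
  · exact ha₀ ⟨by simpa [max_eq_left ha.le] using hvalue 0 le_rfl (by simpa using hmS), ha.ne'⟩
end

section
/- Let S be a numerical semigroup with S ≠ ℤ₊. Then every monic linear pattern p(X₁,…,Xₙ) = a₁X₁ + ⋯ + aₙXₙ + a₀ (with a₁ = 1) admitted by the maximal ideal M(S) is an endopattern of M(S), i.e., p(M(S)) ⊆ M(S). -/
open Finset

/-! Let `F` be the Frobenius number of `S`, its largest gap. If the pattern vanished at
`s₁ ≥ ⋯ ≥ sₙ` in `M(S)`, then raising `s₁` to `s₁ + F > F` keeps the sequence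
non-increasing in `M(S)` and, as `a₁ = 1`, raises the value to the gap `F`, contradicting
admissibility. -/

theorem exists_largest_gap {S : Set ℤ} (hfin : {z : ℤ | 0 ≤ z ∧ z ∉ S}.Finite)
    (hgap : {z : ℤ | 0 ≤ z ∧ z ∉ S}.Nonempty) :
    ∃ F, 0 ≤ F ∧ F ∉ S ∧ ∀ z, F < z → z ∈ S := by
  obtain ⟨F, ⟨hF0, hFS⟩, hmax⟩ := Set.exists_max_image _ id hfin hgap
  refine ⟨F, hF0, hFS, fun z hz => ?_⟩
  by_contra hzS
  exact absurd (hmax z ⟨by omega, hzS⟩) (not_le.mpr hz)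

theorem Antitone.add_pi_single_of_isBot {ι : Type*} [PartialOrder ι] [DecidableEq ι]
    {s : ι → ℤ} (hs : Antitone s) {i₀ : ι} (hbot : IsBot i₀) {c : ℤ} (hc : 0 ≤ c) :
    Antitone (s + Pi.single i₀ c) := by
  intro i j hij
  have hsij := hs hij
  by_cases hj : j = i₀
  · obtain rfl : i = j := hj ▸ le_antisymm (hj ▸ hij) (hbot i)
    exact le_rfl
  · by_cases hi : i = i₀
    · subst hi
      simp only [Pi.add_apply, Pi.single_eq_same, Pi.single_eq_of_ne hj, add_zero]
      omega
    · simpa [Pi.single_apply, hi, hj] using hsij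

theorem sum_mul_add_pi_single {ι : Type*} [Fintype ι] [DecidableEq ι]
    (a s : ι → ℤ) (i₀ : ι) (c : ℤ) :
    ∑ i, a i * (s + Pi.single i₀ c : ι → ℤ) i = ∑ i, a i * s i + a i₀ * c := by
  simp [mul_add, Finset.sum_add_distrib, Pi.single_apply]

/-- If `S ≠ ℤ₊`, every monic linear pattern admitted by the maximal ideal
`M(S) = S \ {0}` is an endopattern of `M(S)`. -/
theorem stmt11 (S : Set ℤ) (hS : IsNumericalSemigroup S)
    (hSne : S ≠ {z : ℤ | 0 ≤ z})
    {n : ℕ} (hn : 0 < n) (a : Fin n → ℤ) (a₀ : ℤ) (hmonic : a ⟨0, hn⟩ = 1)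
    (hadm : AdmittedBy a a₀ (S \ {0}) S) :
    AdmittedBy a a₀ (S \ {0}) (S \ {0}) := by
  obtain ⟨-, hpos, -, hfin⟩ := hS
  have hgap : {z : ℤ | 0 ≤ z ∧ z ∉ S}.Nonempty := by
    by_contra! hempty
    refine hSne (Set.ext fun z => ⟨hpos z, fun hz => ?_⟩)
    by_contra hzS
    exact hempty.subset ⟨hz, hzS⟩
  obtain ⟨F, hF0, hFS, hlarge⟩ := exists_largest_gap hfin hgap
  intro s hs hsM
  refine ⟨hadm s hs hsM, fun hzero => hFS ?_⟩
  let i₀ : Fin n := ⟨0, hn⟩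
  have hs₀ : 0 < s i₀ := lt_of_le_of_ne (hpos _ (hsM i₀).1) (Ne.symm (hsM i₀).2)
  have hshiftM : ∀ i, (s + Pi.single i₀ F : Fin n → ℤ) i ∈ S \ {0} := by
    intro i
    by_cases hi : i = i₀
    · subst hi
      simp only [Pi.add_apply, Pi.single_eq_same]
      exact ⟨hlarge _ (by omega), by simp; omega⟩
    · simpa [Pi.single_apply, hi] using hsM i
  have hval := hadm _ (hs.add_pi_single_of_isBot (fun j => Nat.zero_le j.val) hF0) hshiftM
  rwa [sum_mul_add_pi_single, hmonic, one_mul, add_right_comm, hzero, zero_add] at hval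
end

section
/- Let I be a proper ideal of a numerical semigroup S, let μ(I) = min I, and let p(X₁,…,Xₙ) = a₁X₁ + ⋯ + aₙXₙ + a₀ be a linear pattern. (i) If p is a surjective endopattern of I, i.e., p is admitted by I and p(I) = I, then a₀ = −((a₁ + ⋯ + aₙ) − 1)·μ(I). (ii) Conversely, if p is premonic, p is an endopattern of I (p(I) ⊆ I), and a₀ = −((a₁ + ⋯ + aₙ) − 1)·μ(I), then p(I) = I. -/
open Finset

/-
Testing an admitted pattern on the two-step sequences `(μ + m, …, μ + m, μ, …, μ)`
with `m ∈ S` arbitrarily large shows that every partial sum `a₁ + ⋯ + a_k` is nonnegative, since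
the value `(∑ aᵢ)μ + a₀ + (a₁ + ⋯ + a_k)m` must lie in `S ⊆ ℤ₊`. By Abel summation the pattern
then attains its minimum on `I` at the constant sequence `μ`. If `p(I) = I`, that minimum is
`μ(I) = μ`, which pins down `a₀`. Conversely, if `a₁ + ⋯ + a_k = 1`, the sequence
`(x, …, x, μ, …, μ)` with `k` entries `x` is sent to `x + ((∑ aᵢ) - 1)μ + a₀ = x`.
-/

lemma IsNumericalSemigroup.exists_forall_le_mem {S : Set ℤ} (hS : IsNumericalSemigroup S) :
    ∃ B, ∀ m, B ≤ m → m ∈ S := by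
  obtain ⟨B, hB⟩ := hS.2.2.2.bddAbove
  refine ⟨max (B + 1) 0, fun m hm => by_contra fun hmS => ?_⟩
  have := hB ⟨(le_max_right _ _).trans hm, hmS⟩
  omega

section Patterns

variable {n : ℕ}

def prefixSum (a : Fin n → ℤ) (k : ℕ) : ℤ :=
  ∑ i ∈ univ.filter (fun i : Fin n => (i : ℕ) < k), a i

def stepSeq (k : ℕ) (x y : ℤ) : Fin n → ℤ := fun i => if (i : ℕ) < k then x else y

lemma stepSeq_antitone {k : ℕ} {x y : ℤ} (h : y ≤ x) : Antitone (stepSeq (n := n) k x y) := by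
  intro i j hij
  simp only [stepSeq]
  split_ifs <;> omega

lemma stepSeq_mem {A : Set ℤ} {k : ℕ} {x y : ℤ} (hx : x ∈ A) (hy : y ∈ A) (i : Fin n) :
    stepSeq k x y i ∈ A := by
  unfold stepSeq
  split_ifs
  exacts [hx, hy]

lemma sum_mul_stepSeq (a : Fin n → ℤ) (k : ℕ) (x y : ℤ) :
    ∑ i, a i * stepSeq k x y i = prefixSum a k * x + (∑ i, a i - prefixSum a k) * y := by
  have hsplit := sum_filter_add_sum_filter_not univ (fun i : Fin n => (i : ℕ) < k) a
  simp only [stepSeq, mul_ite, sum_ite, ← sum_mul, prefixSum]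
  rw [← hsplit, add_sub_cancel_left]

lemma prefixSum_nonneg_of_admittedBy {a : Fin n → ℤ} {a₀ μ : ℤ} {S I : Set ℤ}
    (hS : IsNumericalSemigroup S) (hI : IsIdealOf I S) (hμ : μ ∈ I)
    (hadm : AdmittedBy a a₀ I S) (k : ℕ) : 0 ≤ prefixSum a k := by
  obtain ⟨B, hB⟩ := hS.exists_forall_le_mem
  set m := max B ((∑ i, a i) * μ + a₀ + 1)
  have hmS : m ∈ S := hB m (le_max_left _ _)
  have hm0 : 0 ≤ m := hS.2.1 m hmS
  have hval := hS.2.1 _ <| hadm _ (stepSeq_antitone (by omega))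
    (stepSeq_mem (k := k) (hI.2.2 μ hμ m hmS) hμ)
  rw [sum_mul_stepSeq] at hval
  by_contra! hneg
  nlinarith [le_max_right B ((∑ i, a i) * μ + a₀ + 1)]

lemma sum_range_mul_nonneg_of_partial_sums_nonneg {a t : ℕ → ℤ}
    (ha : ∀ k ≤ n, 0 ≤ ∑ i ∈ range k, a i)
    (ht : ∀ i, i + 1 < n → t (i + 1) ≤ t i) (ht0 : ∀ i < n, 0 ≤ t i) :
    0 ≤ ∑ i ∈ range n, a i * t i := by
  rcases n with _ | n
  · simp
  rw [sum_congr rfl fun i _ => mul_comm (a i) (t i)]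
  simp only [← smul_eq_mul (t _)]
  rw [sum_range_by_parts, Nat.add_sub_cancel]
  have hlast : 0 ≤ t n • ∑ i ∈ range (n + 1), a i := mul_nonneg (ht0 n (by omega)) (ha _ le_rfl)
  have hsteps : ∑ i ∈ range n, (t (i + 1) - t i) • ∑ j ∈ range (i + 1), a j ≤ 0 :=
    sum_nonpos fun i hi => by
      have hi := mem_range.1 hi
      exact mul_nonpos_of_nonpos_of_nonneg (sub_nonpos.2 (ht i (by omega))) (ha _ (by omega))
  linarith

lemma sum_mul_le_sum_mul_of_prefixSum_nonneg {a s : Fin n → ℤ} {μ : ℤ}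
    (ha : ∀ k, 0 ≤ prefixSum a k) (hs : Antitone s) (hμ : ∀ i, μ ≤ s i) :
    (∑ i, a i) * μ ≤ ∑ i, a i * s i := by
  let extend (f : Fin n → ℤ) (i : ℕ) : ℤ := if h : i < n then f ⟨i, h⟩ else 0
  have extend_val (f : Fin n → ℤ) (i : Fin n) : extend f i = f i := by simp [extend]
  have hprefix (k : ℕ) (hk : k ≤ n) : ∑ i ∈ range k, extend a i = prefixSum a k := by
    have hrange : (range n).filter (· < k) = range k := by ext; simp; omega
    rw [prefixSum, sum_filter, ← hrange, sum_filter,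
      ← Fin.sum_univ_eq_sum_range (fun i => if i < k then extend a i else 0)]
    simp only [extend_val]
  have hsum : ∑ i ∈ range n, extend a i * (extend s i - μ) = ∑ i, a i * s i - (∑ i, a i) * μ := by
    rw [← Fin.sum_univ_eq_sum_range (fun i => extend a i * (extend s i - μ)), sum_mul,
      ← sum_sub_distrib]
    simp only [extend_val, mul_sub]
  have hstep (i : ℕ) (hi : i + 1 < n) : extend s (i + 1) - μ ≤ extend s i - μ := by
    simp only [extend, dif_pos hi, dif_pos (by omega : i < n)]
    exact sub_le_sub_right (hs (Fin.mk_le_mk.2 (by omega))) μ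
  have hbase (i : ℕ) (hi : i < n) : 0 ≤ extend s i - μ := by
    simpa only [extend, dif_pos hi, sub_nonneg] using hμ ⟨i, hi⟩
  have := sum_range_mul_nonneg_of_partial_sums_nonneg (fun k hk => hprefix k hk ▸ ha k) hstep hbase
  linarith

lemma a₀_eq_of_patternImage_eq {a : Fin n → ℤ} {a₀ μ : ℤ} {S I : Set ℤ}
    (hS : IsNumericalSemigroup S) (hI : IsIdealOf I S) (hμ : IsLeast I μ)
    (hadm : AdmittedBy a a₀ I S) (himg : patternImage a a₀ I = I) :
    a₀ = -((∑ i, a i) - 1) * μ := by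
  have hconst : (∑ i, a i) * μ + a₀ ∈ I :=
    himg ▸ ⟨fun _ => μ, antitone_const, fun _ => hμ.1, by rw [sum_mul]⟩
  obtain ⟨s, hs, hsI, hμs⟩ : μ ∈ patternImage a a₀ I := himg.symm ▸ hμ.1
  have hmin := sum_mul_le_sum_mul_of_prefixSum_nonneg
    (prefixSum_nonneg_of_admittedBy hS hI hμ.1 hadm) hs (fun i => hμ.2 (hsI i))
  linarith [hμ.2 hconst]

lemma patternImage_eq_of_premonic {a : Fin n → ℤ} {a₀ μ : ℤ} {I : Set ℤ}
    (hμ : IsLeast I μ) (hpre : Premonic a) (hsub : patternImage a a₀ I ⊆ I)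
    (ha₀ : a₀ = -((∑ i, a i) - 1) * μ) : patternImage a a₀ I = I := by
  obtain ⟨k, -, -, hk⟩ := hpre
  refine hsub.antisymm fun x hx =>
    ⟨stepSeq k x μ, stepSeq_antitone (hμ.2 hx), stepSeq_mem hx hμ.1, ?_⟩
  rw [sum_mul_stepSeq, show prefixSum a k = 1 from hk, ha₀]
  ring

end Patterns

theorem stmt12_general {n : ℕ} (a : Fin n → ℤ) (a₀ : ℤ) (S I : Set ℤ) (μ : ℤ)
    (hS : IsNumericalSemigroup S) (hI : IsIdealOf I S)
    (hμ : IsLeast I μ) :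
    ((AdmittedBy a a₀ I S ∧ patternImage a a₀ I = I) →
        a₀ = -((∑ i, a i) - 1) * μ) ∧
    ((Premonic a ∧ patternImage a a₀ I ⊆ I ∧ a₀ = -((∑ i, a i) - 1) * μ) →
        patternImage a a₀ I = I) :=
  ⟨fun ⟨hadm, himg⟩ => a₀_eq_of_patternImage_eq hS hI hμ hadm himg,
    fun ⟨hpre, hsub, ha₀⟩ => patternImage_eq_of_premonic hμ hpre hsub ha₀⟩

/-- (i) A linear surjective endopattern of a proper ideal `I` satisfies
`a₀ = −((∑ aᵢ) − 1)·μ(I)`.  (ii) Conversely a premonic endopattern of `I` with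
`a₀ = −((∑ aᵢ) − 1)·μ(I)` is surjective. -/
theorem stmt12 {n : ℕ} (a : Fin n → ℤ) (a₀ : ℤ) (S I : Set ℤ) (μ : ℤ)
    (hS : IsNumericalSemigroup S) (hI : IsIdealOf I S) (hproper : I ≠ S)
    (hμ : IsLeast I μ) :
    ((AdmittedBy a a₀ I S ∧ patternImage a a₀ I = I) →
        a₀ = -((∑ i, a i) - 1) * μ) ∧
    ((Premonic a ∧ patternImage a a₀ I ⊆ I ∧ a₀ = -((∑ i, a i) - 1) * μ) →
        patternImage a a₀ I = I) :=
  stmt12_general a a₀ S I μ hS hI hμ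
end

section
/- Let S be a numerical semigroup and let a₁ ≥ a₂ ≥ ⋯ ≥ a_e be elements of S that generate S, i.e., S is the set of all sums n₁a₁ + ⋯ + n_e a_e with n₁,…,n_e nonnegative integers. Let p(X₁,…,X_e) = a₁X₁ + (a₂ − a₁)X₂ + ⋯ + (a_e − a_{e−1})X_e. Then p is a homogeneous linear pattern admitted by ℤ₊ and p(ℤ₊) = S. -/
open Finset

/-!
Write `t i = s i - s (i + 1)` (with `s e = 0`) for the drops of a non-increasing sequence `s`
of nonnegative integers. Summation by parts turns the pattern into `∑ i, a i * t i`; the drops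
are arbitrary nonnegative integers, and every such `t` arises from `s i = ∑_{j ≥ i} t j`.
So the pattern takes exactly the values `∑ i, c i * a i` with `c i ∈ ℕ`, and these are
nonnegative as soon as the `a i` are.
-/

lemma sum_range_sub_prev_mul {f g : ℕ → ℤ} {n : ℕ} (hg : g n = 0) :
    ∑ k ∈ range n, (f k - if k = 0 then 0 else f (k - 1)) * g k
      = ∑ k ∈ range n, f k * (g k - g (k + 1)) := by
  cases n with
  | zero => simp
  | succ m =>
    simp only [sub_mul, mul_sub, sum_sub_distrib]
    rw [sum_range_succ' (fun k => (if k = 0 then 0 else f (k - 1)) * g k),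
      sum_range_succ (fun k => f k * g (k + 1)), hg]
    simp

section

variable {e : ℕ}

def extendByZero (s : Fin e → ℤ) (k : ℕ) : ℤ := if h : k < e then s ⟨k, h⟩ else 0

lemma extendByZero_of_lt (s : Fin e → ℤ) {k : ℕ} (hk : k < e) : extendByZero s k = s ⟨k, hk⟩ :=
  dif_pos hk

@[simp]
lemma extendByZero_val (s : Fin e → ℤ) (i : Fin e) : extendByZero s i = s i :=
  extendByZero_of_lt s i.isLt

lemma extendByZero_of_le (s : Fin e → ℤ) {k : ℕ} (hk : e ≤ k) : extendByZero s k = 0 := by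
  simp [extendByZero, not_lt.mpr hk]

/-- The coefficients `a₁, a₂ - a₁, …, a_e - a_{e-1}` of the pattern. -/
def consecutiveDiff (a : Fin e → ℤ) (i : Fin e) : ℤ :=
  a i - if _ : 0 < (i : ℕ) then a ⟨(i : ℕ) - 1, lt_of_le_of_lt (Nat.sub_le _ _) i.isLt⟩ else 0

lemma consecutiveDiff_eq (a : Fin e → ℤ) (i : Fin e) :
    consecutiveDiff a i
      = extendByZero a i - if (i : ℕ) = 0 then 0 else extendByZero a ((i : ℕ) - 1) := by
  obtain ⟨_ | k, hk⟩ := i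
  · simp [consecutiveDiff, extendByZero, hk]
  · simp [consecutiveDiff, extendByZero, hk, Nat.lt_of_succ_lt hk]

lemma sum_consecutiveDiff_mul (a s : Fin e → ℤ) :
    ∑ i, consecutiveDiff a i * s i
      = ∑ i : Fin e, a i * (extendByZero s i - extendByZero s (i + 1)) := by
  have h := sum_range_sub_prev_mul (f := extendByZero a) (extendByZero_of_le s le_rfl)
  rw [← Fin.sum_univ_eq_sum_range, ← Fin.sum_univ_eq_sum_range] at h
  simpa [consecutiveDiff_eq] using h

lemma extendByZero_sub_succ_nonneg {s : Fin e → ℤ} (hs : Antitone s) (h0 : ∀ i, 0 ≤ s i)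
    (k : ℕ) : 0 ≤ extendByZero s k - extendByZero s (k + 1) := by
  by_cases hk : k + 1 < e
  · rw [extendByZero_of_lt s (Nat.lt_of_succ_lt hk), extendByZero_of_lt s hk, sub_nonneg]
    exact hs (Fin.mk_le_mk.mpr k.le_succ)
  · rw [extendByZero_of_le s (not_lt.mp hk), sub_zero]
    unfold extendByZero
    split_ifs
    exacts [h0 _, le_rfl]

lemma exists_antitone_extendByZero_sub_succ (t : Fin e → ℕ) :
    ∃ s : Fin e → ℤ, Antitone s ∧ (∀ i, 0 ≤ s i) ∧
      ∀ i : Fin e, extendByZero s i - extendByZero s (i + 1) = t i := by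
  set t' := extendByZero (fun i => (t i : ℤ))
  have ht' : ∀ k, 0 ≤ t' k := fun k => by unfold t' extendByZero; split_ifs <;> simp
  have tail : ∀ k, extendByZero (fun i : Fin e => ∑ j ∈ Ico (i : ℕ) e, t' j) k
      = ∑ j ∈ Ico k e, t' j := by
    intro k
    unfold extendByZero
    split_ifs with hk
    · rfl
    · rw [Ico_eq_empty_of_le (not_lt.mp hk), sum_empty]
  refine ⟨fun i => ∑ j ∈ Ico (i : ℕ) e, t' j, fun i j hij => ?_,
    fun i => sum_nonneg fun k _ => ht' k, fun i => ?_⟩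
  · exact sum_le_sum_of_subset_of_nonneg (Ico_subset_Ico_left hij) fun k _ _ => ht' k
  · rw [tail, tail, sum_eq_sum_Ico_succ_bot i.isLt, add_sub_cancel_right]
    simp [t']

lemma sum_consecutiveDiff_mul_nonneg {a : Fin e → ℤ} (ha : ∀ i, 0 ≤ a i) (s : Fin e → ℤ)
    (hs : Antitone s) (h0 : ∀ i, 0 ≤ s i) : 0 ≤ ∑ i, consecutiveDiff a i * s i := by
  rw [sum_consecutiveDiff_mul]
  exact sum_nonneg fun i _ => mul_nonneg (ha i) (extendByZero_sub_succ_nonneg hs h0 i)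

lemma patternImage_consecutiveDiff (a : Fin e → ℤ) :
    patternImage (consecutiveDiff a) 0 {z | 0 ≤ z}
      = {x | ∃ c : Fin e → ℕ, x = ∑ i, (c i : ℤ) * a i} := by
  ext x
  constructor
  · rintro ⟨s, hs, h0, rfl⟩
    refine ⟨fun i => (extendByZero s i - extendByZero s (i + 1)).toNat, ?_⟩
    rw [add_zero, sum_consecutiveDiff_mul]
    refine sum_congr rfl fun i _ => ?_
    rw [Int.toNat_of_nonneg (extendByZero_sub_succ_nonneg hs h0 i), mul_comm]
  · rintro ⟨c, rfl⟩
    obtain ⟨s, hs, h0, hc⟩ := exists_antitone_extendByZero_sub_succ c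
    refine ⟨s, hs, h0, ?_⟩
    rw [add_zero, sum_consecutiveDiff_mul]
    exact sum_congr rfl fun i _ => by rw [hc, mul_comm]

end

theorem stmt17_general {e : ℕ} (S : Set ℤ) (hS : IsNumericalSemigroup S) (a : Fin e → ℤ)
    (hmem : ∀ i, a i ∈ S)
    (hgen : S = {x : ℤ | ∃ c : Fin e → ℕ, x = ∑ i, (c i : ℤ) * a i}) :
    (∀ s : Fin e → ℤ, Antitone s → (∀ i, 0 ≤ s i) →
        0 ≤ ∑ i, (a i - if _ : 0 < (i : ℕ) then
            a ⟨(i : ℕ) - 1, lt_of_le_of_lt (Nat.sub_le _ _) i.isLt⟩ else 0) * s i) ∧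
    patternImage (fun i : Fin e => a i - if _ : 0 < (i : ℕ) then
        a ⟨(i : ℕ) - 1, lt_of_le_of_lt (Nat.sub_le _ _) i.isLt⟩ else 0) 0
      {z : ℤ | 0 ≤ z} = S := by
  subst hgen
  exact ⟨sum_consecutiveDiff_mul_nonneg fun i => hS.2.1 _ (hmem i),
    patternImage_consecutiveDiff a⟩

/-- Any numerical semigroup `S = ⟨a₁,…,a_e⟩` with `a₁ ≥ ⋯ ≥ a_e` is the image of ℤ₊
under the homogeneous pattern `a₁X₁ + (a₂−a₁)X₂ + ⋯ + (a_e−a_{e−1})X_e`, which is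
admitted by ℤ₊. -/
theorem stmt17 {e : ℕ} (S : Set ℤ) (hS : IsNumericalSemigroup S) (a : Fin e → ℤ)
    (hanti : Antitone a) (hmem : ∀ i, a i ∈ S)
    (hgen : S = {x : ℤ | ∃ c : Fin e → ℕ, x = ∑ i, (c i : ℤ) * a i}) :
    (∀ s : Fin e → ℤ, Antitone s → (∀ i, 0 ≤ s i) →
        0 ≤ ∑ i, (a i - if _ : 0 < (i : ℕ) then
            a ⟨(i : ℕ) - 1, lt_of_le_of_lt (Nat.sub_le _ _) i.isLt⟩ else 0) * s i) ∧
    patternImage (fun i : Fin e => a i - if _ : 0 < (i : ℕ) then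
        a ⟨(i : ℕ) - 1, lt_of_le_of_lt (Nat.sub_le _ _) i.isLt⟩ else 0) 0
      {z : ℤ | 0 ≤ z} = S :=
  stmt17_general S hS a hmem hgen
end

section
/- Let S be a numerical semigroup and let a₁, a₂ be integers with a₁ ∈ S, gcd(a₁, a₂) = 1 and a₁ + a₂ ≥ 1. Let p(X₁,X₂) = a₁X₁ + a₂X₂ and p(S) = {a₁s₁ + a₂s₂ : s₁, s₂ ∈ S, s₁ ≥ s₂}. Then S = p(S)/(a₁ + a₂), i.e., S = {x ∈ ℤ₊ : (a₁ + a₂)·x ∈ p(S)}. -/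
open Finset

/-!
Write `d = a₁ + a₂`. The inclusion `S ⊆ p(S)/d` is witnessed by `s₁ = s₂ = x`. Conversely, if
`d x = a₁ s₁ + a₂ s₂` then `a₁ (s₁ - x) = a₂ (x - s₂)`, so coprimality gives `x - s₂ = a₁ t`,
and then `a₁ (s₁ - s₂) = a₁ d t`; as `s₂ ≤ s₁` and `d > 0` we may take `t ≥ 0`. Hence
`x = s₂ + t a₁` lies in `S`.
-/

theorem add_nsmul_mem_of_forall_add_mem {M : Type*} [AddMonoid M] {S : Set M}
    (hadd : ∀ a ∈ S, ∀ b ∈ S, a + b ∈ S) {s a : M} (hs : s ∈ S) (ha : a ∈ S) (n : ℕ) :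
    s + n • a ∈ S := by
  induction n with
  | zero => simpa using hs
  | succ n ih => simpa [succ_nsmul, add_assoc] using hadd _ ih _ ha

theorem Int.exists_nonneg_eq_add_mul_of_add_mul_eq {a b s₁ s₂ x : ℤ} (hab : IsCoprime a b)
    (hpos : 0 < a + b) (hle : s₂ ≤ s₁) (h : (a + b) * x = a * s₁ + b * s₂) :
    ∃ t, 0 ≤ t ∧ x = s₂ + a * t := by
  have hkey : a * (s₁ - x) = b * (x - s₂) := by linear_combination -h
  obtain ⟨t, ht⟩ : a ∣ x - s₂ := hab.dvd_of_dvd_mul_left ⟨s₁ - x, hkey.symm⟩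
  rcases eq_or_ne a 0 with rfl | ha
  · exact ⟨0, le_rfl, by linarith⟩
  have hdiff : s₁ - s₂ = (a + b) * t :=
    mul_left_cancel₀ ha (by linear_combination hkey + (a + b) * ht)
  exact ⟨t, nonneg_of_mul_nonneg_right (hdiff ▸ sub_nonneg.2 hle) hpos, by linarith⟩

/-- If `a₁ ∈ S`, `gcd(a₁,a₂) = 1` and `a₁ + a₂ ≥ 1`, then for the pattern
`p(X₁,X₂) = a₁X₁ + a₂X₂` one has `S = p(S)/(a₁+a₂)`. -/
theorem stmt18 (S : Set ℤ) (hS : IsNumericalSemigroup S) (a₁ a₂ : ℤ)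
    (ha₁ : a₁ ∈ S) (hcop : Int.gcd a₁ a₂ = 1) (hsum : 1 ≤ a₁ + a₂) :
    S = {x : ℤ | 0 ≤ x ∧ (a₁ + a₂) * x ∈
      {y : ℤ | ∃ s₁ ∈ S, ∃ s₂ ∈ S, s₂ ≤ s₁ ∧ y = a₁ * s₁ + a₂ * s₂}} := by
  obtain ⟨-, hnonneg, hadd, -⟩ := hS
  ext x
  constructor
  · intro hx
    exact ⟨hnonneg x hx, x, hx, x, hx, le_rfl, by ring⟩
  · rintro ⟨-, s₁, -, s₂, hs₂, hle, h⟩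
    obtain ⟨t, ht, rfl⟩ := Int.exists_nonneg_eq_add_mul_of_add_mul_eq
      (Int.isCoprime_iff_gcd_eq_one.2 hcop) hsum hle h
    lift t to ℕ using ht
    simpa [mul_comm] using add_nsmul_mem_of_forall_add_mem hadd hs₂ ha₁ t
end
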